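/- arXiv:1610.05525 — 4 statements merged into one kernel-verified Lean document; each statement's English description precedes it below -/
import Mathlib

section
/- Let H be a real Banach space, let A, B be bounded linear operators on H, and let t ≥ 0. If ‖exp(sA)‖ ≤ M₁ and ‖exp(s(A+B))‖ ≤ M₂ for all s ∈ [0,t], and ‖B‖ ≤ L, then ‖exp(t(A+B)) − exp(tA)‖ ≤ M₁·L·M₂·t. -/
/-!
Duhamel's formula: `s ↦ exp ((t - s) • a) * exp (s • b)` interpolates between `exp (t • a)` at
`s = 0` and `exp (t • b)` at `s = t`, and its derivative is `exp ((t - s) • a) * (b - a) * exp (s • b)`.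
Integrating over `[0, t]` and bounding the integrand by `M₁ * ‖b - a‖ * M₂` gives the estimate.
-/

open NormedSpace

section Duhamel

variable {𝔸 : Type*} [NormedRing 𝔸] [NormedAlgebra ℝ 𝔸] [CompleteSpace 𝔸]

theorem hasDerivAt_exp_smul_sub_mul_exp_smul (a b : 𝔸) (t s : ℝ) :
    HasDerivAt (fun u : ℝ => exp ((t - u) • a) * exp (u • b))
      (exp ((t - s) • a) * (b - a) * exp (s • b)) s := by
  have hA : HasDerivAt (fun u : ℝ => exp ((t - u) • a)) (-(exp ((t - s) • a) * a)) s := by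
    simpa [Function.comp_def] using
      (hasDerivAt_exp_smul_const (𝕂 := ℝ) a (t - s)).scomp s ((hasDerivAt_id s).const_sub t)
  refine (hA.mul (hasDerivAt_exp_smul_const' (𝕂 := ℝ) b s)).congr_deriv ?_
  noncomm_ring

theorem continuous_exp_smul_sub_mul_mul_exp_smul (a c b : 𝔸) (t : ℝ) :
    Continuous fun s : ℝ => exp ((t - s) • a) * c * exp (s • b) := by
  have hexp (x : 𝔸) : Continuous fun u : ℝ => exp (u • x) :=
    (differentiable_exp_smul_const ℝ x).continuous
  exact ((hexp a).comp (continuous_sub_left t)).mul continuous_const |>.mul (hexp b)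

theorem exp_smul_sub_exp_smul_eq_integral (a b : 𝔸) (t : ℝ) :
    exp (t • b) - exp (t • a) = ∫ s in (0 : ℝ)..t, exp ((t - s) • a) * (b - a) * exp (s • b) := by
  rw [intervalIntegral.integral_eq_sub_of_hasDerivAt
    (fun s _ => hasDerivAt_exp_smul_sub_mul_exp_smul a b t s)
    ((continuous_exp_smul_sub_mul_mul_exp_smul a (b - a) b t).intervalIntegrable 0 t)]
  simp

theorem norm_exp_smul_sub_exp_smul_le {a b : 𝔸} {t M₁ M₂ L : ℝ} (ht : 0 ≤ t)
    (ha : ∀ s ∈ Set.Icc (0 : ℝ) t, ‖exp (s • a)‖ ≤ M₁)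
    (hb : ∀ s ∈ Set.Icc (0 : ℝ) t, ‖exp (s • b)‖ ≤ M₂) (hab : ‖b - a‖ ≤ L) :
    ‖exp (t • b) - exp (t • a)‖ ≤ M₁ * L * M₂ * t := by
  have hM₁ : 0 ≤ M₁ := (norm_nonneg _).trans (ha 0 ⟨le_rfl, ht⟩)
  have hL : 0 ≤ L := (norm_nonneg _).trans hab
  have hbound : ∀ s ∈ Set.uIoc 0 t, ‖exp ((t - s) • a) * (b - a) * exp (s • b)‖ ≤ M₁ * L * M₂ := by
    rintro s ⟨hs₀, hst⟩
    rw [min_eq_left ht] at hs₀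
    rw [max_eq_right ht] at hst
    calc _ ≤ ‖exp ((t - s) • a)‖ * ‖b - a‖ * ‖exp (s • b)‖ := norm_mul₃_le
      _ ≤ M₁ * L * M₂ := by
        gcongr
        · exact ha _ ⟨by linarith, by linarith⟩
        · exact hb _ ⟨hs₀.le, hst⟩
  calc _ = ‖∫ s in (0 : ℝ)..t, exp ((t - s) • a) * (b - a) * exp (s • b)‖ := by
        rw [exp_smul_sub_exp_smul_eq_integral]
    _ ≤ M₁ * L * M₂ * |t - 0| := intervalIntegral.norm_integral_le_of_norm_le_const hbound
    _ = M₁ * L * M₂ * t := by rw [sub_zero, abs_of_nonneg ht]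

end Duhamel

/-- **Difference of exponentials.**
If `‖exp (s • A)‖ ≤ M₁` and `‖exp (s • (A+B))‖ ≤ M₂` for all `s ∈ [0, t]`, and
`‖B‖ ≤ L`, then `‖exp (t • (A+B)) − exp (t • A)‖ ≤ M₁ * L * M₂ * t`. -/
theorem exp_difference_bound
    {H : Type*} [NormedAddCommGroup H] [NormedSpace ℝ H] [CompleteSpace H]
    (A B : H →L[ℝ] H) (t M₁ M₂ L : ℝ) (ht : 0 ≤ t)
    (hA : ∀ s ∈ Set.Icc (0 : ℝ) t, ‖exp (s • A)‖ ≤ M₁)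
    (hAB : ∀ s ∈ Set.Icc (0 : ℝ) t, ‖exp (s • (A + B))‖ ≤ M₂)
    (hB : ‖B‖ ≤ L) :
    ‖exp (t • (A + B)) - exp (t • A)‖ ≤ M₁ * L * M₂ * t :=
  norm_exp_smul_sub_exp_smul_le ht hA hAB (by rwa [add_sub_cancel_left])
end

section
/- Let H be a real Banach space, let A and J be bounded linear operators on H, let F : H → H be continuous, and let u : [a,b] → H be continuously differentiable with u'(t) = A(u(t)) + F(u(t)) for all t ∈ [a,b]. Then u(b) = exp((b−a)(A+J))(u(a)) + ∫_a^b exp((b−s)(A+J))(F(u(s)) − J(u(s))) ds, where the integral is the Bochner integral. -/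
open NormedSpace Set

/-! Writing `A u + F u = B u + g` with `B = A + J` and `g = F u - J u`, the function
`v t = exp ((b - t) B) (u t)` has derivative `exp ((b - t) B) (g t)`: the propagator cancels
the linear part. The fundamental theorem of calculus for `v` on `[a, b]` is the formula. -/

section

variable {H : Type*} [NormedAddCommGroup H] [NormedSpace ℝ H] [CompleteSpace H]

theorem hasDerivAt_exp_const_sub_smul (B : H →L[ℝ] H) (b s : ℝ) :
    HasDerivAt (fun t : ℝ => exp ((b - t) • B)) ((-1 : ℝ) • (exp ((b - s) • B) * B)) s :=
  (hasDerivAt_exp_smul_const B (b - s)).scomp s ((hasDerivAt_id s).const_sub b)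

theorem hasDerivAt_exp_const_sub_smul_apply {B : H →L[ℝ] H} {u : ℝ → H} {u' : H} {b s : ℝ}
    (hu : HasDerivAt u u' s) :
    HasDerivAt (fun t => exp ((b - t) • B) (u t)) (exp ((b - s) • B) (u' - B (u s))) s := by
  convert (hasDerivAt_exp_const_sub_smul B b s).clm_apply hu using 1
  simp only [neg_one_smul, neg_apply, mul_apply_eq_comp, map_sub]
  abel

theorem eq_exp_smul_apply_add_integral {B : H →L[ℝ] H} {u g : ℝ → H} {a b : ℝ}
    (hu : ∀ t ∈ uIcc a b, HasDerivAt u (B (u t) + g t) t) (hg : ContinuousOn g (uIcc a b)) :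
    u b = exp ((b - a) • B) (u a) + ∫ s in a..b, exp ((b - s) • B) (g s) := by
  have hv : ∀ t ∈ uIcc a b,
      HasDerivAt (fun t => exp ((b - t) • B) (u t)) (exp ((b - t) • B) (g t)) t := by
    intro t ht
    simpa using hasDerivAt_exp_const_sub_smul_apply (B := B) (b := b) (hu t ht)
  have hexp : Continuous fun t : ℝ => exp ((b - t) • B) :=
    continuous_iff_continuousAt.2 fun t => (hasDerivAt_exp_const_sub_smul B b t).continuousAt
  have hint : IntervalIntegrable (fun s => exp ((b - s) • B) (g s)) MeasureTheory.volume a b :=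
    (hexp.continuousOn.clm_apply hg).intervalIntegrable
  rw [intervalIntegral.integral_eq_sub_of_hasDerivAt hv hint]
  simp

end

/-- **Variation of constants after linearization.**
Let `A`, `J` be bounded operators on a real Banach space `H`, `F : H → H`
continuous, and `u : [a,b] → H` continuously differentiable with
`u' = A u + F (u)` on `[a,b]`.  Then
`u(b) = exp ((b−a)(A+J)) (u a) + ∫_a^b exp ((b−s)(A+J)) (F (u s) − J (u s)) ds`. -/
theorem variation_of_constants_linearized
    {H : Type*} [NormedAddCommGroup H] [NormedSpace ℝ H] [CompleteSpace H]
    (A J : H →L[ℝ] H) (F : H → H) (hF : Continuous F)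
    (a b : ℝ) (hab : a ≤ b) (u : ℝ → H)
    (hu : ∀ t ∈ Set.Icc a b, HasDerivAt u (A (u t) + F (u t)) t) :
    u b = exp ((b - a) • (A + J)) (u a) +
      ∫ s in a..b, exp ((b - s) • (A + J)) (F (u s) - J (u s)) := by
  rw [← uIcc_of_le hab] at hu
  have hucont : ContinuousOn u (uIcc a b) := fun t ht =>
    (hu t ht).continuousAt.continuousWithinAt
  refine eq_exp_smul_apply_add_integral (fun t ht => ?_)
    ((hF.comp_continuousOn hucont).sub (J.continuous.comp_continuousOn hucont))
  convert hu t ht using 1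
  simp only [add_apply]
  abel
end

section
/- Let H be a real Banach space, let T > 0, let A be a bounded linear operator on H with ‖exp(tA)‖ ≤ M for all t ∈ [0,T], and let F : H → H be Fréchet differentiable with ‖F'(v)‖ ≤ L for all v ∈ H. If u : [0,T] → H is continuously differentiable and satisfies u'(t) = A(u(t)) + F(u(t)) for all t ∈ [0,T], then ‖u'(t)‖ ≤ M·e^{M·L·t}·‖A(u(0)) + F(u(0))‖ for all t ∈ [0,T]. -/
/-!
Differentiating the equation, `w = u' = A u + F u` solves the linear equation
`w' = A w + F'(u) w`. Duhamel's formula for it gives `‖w r‖ ≤ M ‖w 0‖ + M L ∫₀ʳ ‖w‖`,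
and Grönwall's inequality in integral form turns this into `‖w t‖ ≤ M e^{MLt} ‖w 0‖`.
-/

open NormedSpace Set

section Primitive

variable {E : Type*} [NormedAddCommGroup E] [NormedSpace ℝ E] [CompleteSpace E]
  {ρ : ℝ → E} {a b t : ℝ}

theorem hasDerivWithinAt_integral_Icc (hρ : ContinuousOn ρ (Icc a b)) (ht : t ∈ Icc a b) :
    HasDerivWithinAt (fun x => ∫ s in a..x, ρ s) (ρ t) (Icc a b) t := by
  have : Fact (t ∈ Icc a b) := ⟨ht⟩
  exact intervalIntegral.integral_hasDerivWithinAt_right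
    ((hρ.mono (uIcc_subset_Icc (left_mem_Icc.2 (ht.1.trans ht.2)) ht)).intervalIntegrable)
    (hρ.stronglyMeasurableAtFilter_nhdsWithin measurableSet_Icc t) (hρ t ht)

theorem hasDerivWithinAt_Ici_integral (hρ : ContinuousOn ρ (Icc a b)) (ht : t ∈ Ico a b) :
    HasDerivWithinAt (fun x => ∫ s in a..x, ρ s) (ρ t) (Ici t) t :=
  (hasDerivWithinAt_integral_Icc hρ (Ico_subset_Icc_self ht)).mono_of_mem_nhdsWithin
    (Icc_mem_nhdsGE_of_mem ht)

theorem continuousOn_integral_Icc (hρ : ContinuousOn ρ (Icc a b)) :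
    ContinuousOn (fun x => ∫ s in a..x, ρ s) (Icc a b) :=
  fun _ ht => (hasDerivWithinAt_integral_Icc hρ ht).continuousWithinAt

end Primitive

section Duhamel

variable {E : Type*} [NormedAddCommGroup E] [NormedSpace ℝ E] [CompleteSpace E]
  {A : E →L[ℝ] E} {w : ℝ → E}

theorem hasDerivAt_exp_smul_sub_apply {w' : E} {r s : ℝ} (hw : HasDerivAt w w' s) :
    HasDerivAt (fun x => exp ((r - x) • A) (w x)) (exp ((r - s) • A) (w' - A (w s))) s := by
  have hexp : HasDerivAt (fun x : ℝ => exp ((r - x) • A)) (-(exp ((r - s) • A) * A)) s := by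
    simpa [Function.comp_def] using (hasDerivAt_exp_smul_const (𝕂 := ℝ) A (r - s)).scomp s
      ((hasDerivAt_id s).const_sub r)
  convert hexp.clm_apply hw using 1
  simp [add_comm, sub_eq_neg_add]

/-- The estimate read off Duhamel's formula `w r = exp (r A) w 0 + ∫₀ʳ exp ((r - s) A) f s ds`. -/
theorem norm_le_duhamel {f : ℝ → E} {ρ : ℝ → ℝ} {r M : ℝ} (hr : 0 ≤ r)
    (hA : ∀ τ ∈ Icc 0 r, ‖exp (τ • A)‖ ≤ M)
    (hw : ∀ s ∈ Icc 0 r, HasDerivAt w (A (w s) + f s) s)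
    (hρ : ContinuousOn ρ (Icc 0 r)) (hf : ∀ s ∈ Ico 0 r, ‖f s‖ ≤ ρ s) :
    ‖w r‖ ≤ M * (‖w 0‖ + ∫ s in 0..r, ρ s) := by
  have hM : 0 ≤ M := (norm_nonneg _).trans (hA 0 (left_mem_Icc.2 hr))
  have hg : ∀ s ∈ Icc 0 r,
      HasDerivAt (fun x => exp ((r - x) • A) (w x)) (exp ((r - s) • A) (f s)) s := by
    intro s hs
    simpa using hasDerivAt_exp_smul_sub_apply (A := A) (r := r) (hw s hs)
  have hbound : ∀ s ∈ Ico 0 r, ‖exp ((r - s) • A) (f s)‖ ≤ M * ρ s := fun s hs =>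
    ((exp ((r - s) • A)).le_of_opNorm_le (hA _ ⟨sub_nonneg.2 hs.2.le, sub_le_self r hs.1⟩) _).trans
      (mul_le_mul_of_nonneg_left (hf s hs) hM)
  have h0 : ‖exp ((r - 0) • A) (w 0)‖ ≤ M * (‖w 0‖ + ∫ s in 0..0, ρ s) := by
    simpa using (exp (r • A)).le_of_opNorm_le (hA r (right_mem_Icc.2 hr)) (w 0)
  have := image_norm_le_of_norm_deriv_right_le_deriv_boundary'
    (B := fun x => M * (‖w 0‖ + ∫ s in 0..x, ρ s)) (B' := fun s => M * ρ s)
    (fun s hs => (hg s hs).continuousAt.continuousWithinAt)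
    (fun s hs => (hg s (Ico_subset_Icc_self hs)).hasDerivWithinAt) h0
    (((continuousOn_integral_Icc hρ).const_add _).const_smul M)
    (fun s hs => ((hasDerivWithinAt_Ici_integral hρ hs).const_add _).const_mul M)
    hbound (right_mem_Icc.2 hr)
  simpa using this

end Duhamel

theorem add_mul_gronwallBound_zero (a K t : ℝ) :
    a + K * gronwallBound 0 K a t = a * Real.exp (K * t) := by
  rcases eq_or_ne K 0 with rfl | hK
  · simp
  · rw [gronwallBound_of_K_ne_0 hK]
    field_simp
    ring

theorem le_mul_exp_of_le_add_mul_integral {v : ℝ → ℝ} {a K T : ℝ} (hK : 0 ≤ K)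
    (hv : ContinuousOn v (Icc 0 T)) (h : ∀ t ∈ Icc 0 T, v t ≤ a + K * ∫ s in 0..t, v s) :
    ∀ t ∈ Icc 0 T, v t ≤ a * Real.exp (K * t) := by
  have hprim : ∀ t ∈ Icc 0 T, (∫ s in 0..t, v s) ≤ gronwallBound 0 K a (t - 0) :=
    le_gronwallBound_of_liminf_deriv_right_le (continuousOn_integral_Icc hv)
      (fun t ht _ hr => (hasDerivWithinAt_Ici_integral hv ht).liminf_right_slope_le hr)
      (by simp) (fun t ht => by linarith [h t (Ico_subset_Icc_self ht)])
  intro t ht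
  calc v t ≤ a + K * ∫ s in 0..t, v s := h t ht
    _ ≤ a + K * gronwallBound 0 K a t := by gcongr; simpa using hprim t ht
    _ = a * Real.exp (K * t) := add_mul_gronwallBound_zero a K t

theorem first_derivative_bound_general
    {H : Type*} [NormedAddCommGroup H] [NormedSpace ℝ H] [CompleteSpace H]
    (T : ℝ) (A : H →L[ℝ] H) (M : ℝ)
    (hA : ∀ t ∈ Set.Icc (0 : ℝ) T, ‖exp (t • A)‖ ≤ M)
    (F : H → H) (L : ℝ)
    (hFdiff : Differentiable ℝ F) (hF' : ∀ v : H, ‖fderiv ℝ F v‖ ≤ L)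
    (u : ℝ → H)
    (hu : ∀ t ∈ Set.Icc (0 : ℝ) T, HasDerivAt u (A (u t) + F (u t)) t) :
    ∀ t ∈ Set.Icc (0 : ℝ) T,
      ‖A (u t) + F (u t)‖ ≤ M * Real.exp (M * L * t) * ‖A (u 0) + F (u 0)‖ := by
  set w : ℝ → H := fun s => A (u s) + F (u s)
  have hw : ∀ s ∈ Icc 0 T, HasDerivAt w (A (w s) + fderiv ℝ F (u s) (w s)) s := fun s hs =>
    (A.hasFDerivAt.comp_hasDerivAt s (hu s hs)).add
      ((hFdiff (u s)).hasFDerivAt.comp_hasDerivAt s (hu s hs))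
  have hw_cont : ContinuousOn (fun s => ‖w s‖) (Icc 0 T) := fun s hs =>
    (hw s hs).continuousAt.norm.continuousWithinAt
  intro t ht
  have hM : 0 ≤ M := (norm_nonneg _).trans (hA 0 (left_mem_Icc.2 (ht.1.trans ht.2)))
  have hL : 0 ≤ L := (norm_nonneg _).trans (hF' 0)
  have hduhamel : ∀ r ∈ Icc 0 T, ‖w r‖ ≤ M * ‖w 0‖ + M * L * ∫ s in 0..r, ‖w s‖ := by
    intro r hr
    have hsub : Icc 0 r ⊆ Icc 0 T := Icc_subset_Icc_right hr.2
    calc ‖w r‖ ≤ M * (‖w 0‖ + ∫ s in 0..r, L * ‖w s‖) :=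
          norm_le_duhamel hr.1 (fun τ hτ => hA τ (hsub hτ)) (fun s hs => hw s (hsub hs))
            ((hw_cont.mono hsub).const_smul L)
            (fun s _ => (fderiv ℝ F (u s)).le_of_opNorm_le (hF' _) _)
      _ = M * ‖w 0‖ + M * L * ∫ s in 0..r, ‖w s‖ := by
          rw [intervalIntegral.integral_const_mul]; ring
  calc ‖w t‖ ≤ M * ‖w 0‖ * Real.exp (M * L * t) :=
        le_mul_exp_of_le_add_mul_integral (mul_nonneg hM hL) hw_cont hduhamel t ht
    _ = M * Real.exp (M * L * t) * ‖w 0‖ := by ring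

/-- **Bound on the first time derivative of the solution.**
Let `A` be a bounded operator with `‖exp (t A)‖ ≤ M` on `[0,T]` and `F` Fréchet
differentiable with `‖F'(v)‖ ≤ L` for all `v`.  If `u : [0,T] → H` is continuously
differentiable with `u'(t) = A (u t) + F (u t)` on `[0,T]`, then
`‖u'(t)‖ ≤ M e^{M L t} ‖A (u 0) + F (u 0)‖` on `[0,T]`. -/
theorem first_derivative_bound
    {H : Type*} [NormedAddCommGroup H] [NormedSpace ℝ H] [CompleteSpace H]
    (T : ℝ) (hT : 0 < T) (A : H →L[ℝ] H) (M : ℝ)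
    (hA : ∀ t ∈ Set.Icc (0 : ℝ) T, ‖exp (t • A)‖ ≤ M)
    (F : H → H) (L : ℝ)
    (hFdiff : Differentiable ℝ F) (hF' : ∀ v : H, ‖fderiv ℝ F v‖ ≤ L)
    (u : ℝ → H)
    (hu : ∀ t ∈ Set.Icc (0 : ℝ) T, HasDerivAt u (A (u t) + F (u t)) t) :
    ∀ t ∈ Set.Icc (0 : ℝ) T,
      ‖A (u t) + F (u t)‖ ≤ M * Real.exp (M * L * t) * ‖A (u 0) + F (u 0)‖ :=
  first_derivative_bound_general T A M hA F L hFdiff hF' u hu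
end

section
/- Let H be a real Banach space, let T > 0, and let A be a bounded linear operator on H with ‖exp(tA)‖ ≤ M for all t ∈ [0,T]. Let F : H → H be twice Fréchet differentiable and satisfy ‖F(u) − F(v)‖ ≤ L·‖u − v‖, ‖F'(v)‖ ≤ L and ‖F''(v)‖ ≤ L for all u, v ∈ H. Let u : [0,T] → H be twice continuously differentiable with u'(t) = A(u(t)) + F(u(t)) for all t ∈ [0,T], and set K₁ := sup_{t∈[0,T]} ‖u'(t)‖ and K₂ := sup_{t∈[0,T]} ‖u''(t)‖. Fix an integer N ≥ 1, set Δt := T/N and t_n := n·Δt, and define the exponential Rosenbrock–Euler approximations by u₀ := u(0) and u_{n+1} := exp(Δt·K_n)(u_n) + (∫₀^{Δt} exp(s·K_n) ds)(F(u_n) − J_n(u_n)) for 0 ≤ n ≤ N−1, where J_n := F'(u_n) and K_n := A + J_n. Then there exists a constant C, depending only on M, L, T, K₁ and K₂ (and not on N, n or Δt), such that ‖u(t_n) − u_n‖ ≤ C·Δt² for all 0 ≤ n ≤ N. -/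
/-!
On each step the scheme is exact for the problem linearized at the current iterate `x`:
`eremStep A F Δt x` is the value at `Δt` of the solution of `v' = (A + J) v + F x - J x`,
`v 0 = x`, with `J = F'(x)`. Hence the local error `e = u (t + ·) - v` solves
`e' = (A + J) e + r` with `r = F u - F x - J (u - x)`. Taylor's formula for `F` and the
drift bound `‖u (t + s) - u t‖ ≤ K₁ Δt` give `‖r‖ ≤ L K₁² Δt² + O(1) ‖u t - x‖`, so the
continuous Grönwall inequality yields
`‖u tₘ₊₁ - uₘ₊₁‖ ≤ exp (c Δt) (‖u tₘ - uₘ‖ + L K₁² Δt³)`. The discrete Grönwall inequality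
adds up `N = T / Δt` such local errors of order `Δt³` to an error of order `Δt²`.
-/

open NormedSpace

/-- The **exponential Rosenbrock–Euler scheme** with step size `Δt` and initial
value `u0`:  `u_{n+1} = exp (Δt K_n) u_n + (∫₀^{Δt} exp (s K_n) ds) (F u_n − J_n u_n)`,
where `J_n := F'(u_n)` and `K_n := A + J_n`. -/
noncomputable def erem {H : Type*} [NormedAddCommGroup H] [NormedSpace ℝ H]
    [CompleteSpace H] (A : H →L[ℝ] H) (F : H → H) (Δt : ℝ) (u0 : H) : ℕ → H
  | 0 => u0
  | n + 1 =>
      let un := erem A F Δt u0 n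
      let K := A + fderiv ℝ F un
      exp (Δt • K) un +
        (∫ s in (0 : ℝ)..Δt, exp (s • K)) (F un - fderiv ℝ F un un)

open Set

section AffineFlow

variable {H : Type*} [NormedAddCommGroup H] [NormedSpace ℝ H]

/-- Variation of constants: the solution of `v' = K v + c` with `v 0 = x`. -/
noncomputable def affineFlow (K : H →L[ℝ] H) (x c : H) (s : ℝ) : H :=
  exp (s • K) x + ∫ σ in (0 : ℝ)..s, exp (σ • K) c

theorem affineFlow_zero (K : H →L[ℝ] H) (x c : H) : affineFlow K x c 0 = x := by
  simp [affineFlow]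

noncomputable def eremStep (A : H →L[ℝ] H) (F : H → H) (Δt : ℝ) (x : H) : H :=
  affineFlow (A + fderiv ℝ F x) x (F x - fderiv ℝ F x x) Δt

variable [CompleteSpace H]

theorem continuous_exp_smul (K : H →L[ℝ] H) : Continuous fun s : ℝ => exp (s • K) :=
  continuous_iff_continuousAt.2 fun s => (hasDerivAt_exp_smul_const' (𝕂 := ℝ) K s).continuousAt

theorem hasDerivAt_exp_smul_apply (K : H →L[ℝ] H) (y : H) (s : ℝ) :
    HasDerivAt (fun t : ℝ => exp (t • K) y) (K (exp (s • K) y)) s := by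
  simpa using (hasDerivAt_exp_smul_const' K s).clm_apply (hasDerivAt_const s y)

theorem map_integral_exp_smul_apply (K : H →L[ℝ] H) (y : H) (s : ℝ) :
    K (∫ σ in (0 : ℝ)..s, exp (σ • K) y) = exp (s • K) y - y := by
  have hint : ∀ g : H →L[ℝ] H, IntervalIntegrable (fun σ : ℝ => g (exp (σ • K) y))
      MeasureTheory.volume 0 s := fun g =>
    (g.continuous.comp ((continuous_exp_smul K).clm_apply continuous_const)).intervalIntegrable _ _
  rw [← K.intervalIntegral_comp_comm (by simpa using hint 1),
    intervalIntegral.integral_eq_sub_of_hasDerivAt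
      (fun σ _ => hasDerivAt_exp_smul_apply K y σ) (hint K)]
  simp

theorem hasDerivAt_affineFlow (K : H →L[ℝ] H) (x c : H) (s : ℝ) :
    HasDerivAt (affineFlow K x c) (K (affineFlow K x c s) + c) s := by
  have hint : HasDerivAt (fun t : ℝ => ∫ σ in (0 : ℝ)..t, exp (σ • K) c) (exp (s • K) c) s :=
    (((continuous_exp_smul K).clm_apply continuous_const).integral_hasStrictDerivAt 0 s).hasDerivAt
  refine ((hasDerivAt_exp_smul_apply K x s).fun_add hint).congr_deriv ?_
  rw [affineFlow, map_add, map_integral_exp_smul_apply]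
  abel

theorem hasDerivAt_sub_affineFlow {A J : H →L[ℝ] H} {F : H → H} {u : ℝ → H} {t s : ℝ} (x : H)
    (hu : HasDerivAt u (A (u (t + s)) + F (u (t + s))) (t + s)) :
    HasDerivAt (fun s => u (t + s) - affineFlow (A + J) x (F x - J x) s)
      ((A + J) (u (t + s) - affineFlow (A + J) x (F x - J x) s) +
        (F (u (t + s)) - F x - J (u (t + s) - x))) s := by
  refine ((hu.comp_const_add t s).fun_sub (hasDerivAt_affineFlow _ x _ s)).congr_deriv ?_
  simp only [add_apply, map_sub]
  abel

theorem erem_succ (A : H →L[ℝ] H) (F : H → H) (Δt : ℝ) (u0 : H) (n : ℕ) :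
    erem A F Δt u0 (n + 1) = eremStep A F Δt (erem A F Δt u0 n) := by
  rw [erem, eremStep, affineFlow, ContinuousLinearMap.intervalIntegral_apply
    ((continuous_exp_smul _).intervalIntegrable 0 Δt)]

end AffineFlow

section Taylor

variable {E G : Type*} [NormedAddCommGroup E] [NormedSpace ℝ E] [NormedAddCommGroup G]
  [NormedSpace ℝ G] {f : E → G} {L : ℝ}

theorem norm_sub_sub_fderiv_apply_le (hf : Differentiable ℝ f)
    (hf' : Differentiable ℝ (fderiv ℝ f)) (hf'' : ∀ v, ‖fderiv ℝ (fderiv ℝ f) v‖ ≤ L)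
    (x y : E) : ‖f y - f x - fderiv ℝ f x (y - x)‖ ≤ L * ‖y - x‖ ^ 2 := by
  have hL : 0 ≤ L := (norm_nonneg (fderiv ℝ (fderiv ℝ f) 0)).trans (hf'' 0)
  have hderiv : ∀ z ∈ segment ℝ x y, ‖fderiv ℝ f z - fderiv ℝ f x‖ ≤ L * ‖y - x‖ := by
    intro z hz
    calc ‖fderiv ℝ f z - fderiv ℝ f x‖ ≤ L * ‖z - x‖ :=
          convex_univ.norm_image_sub_le_of_norm_fderiv_le (fun w _ => hf' w) (fun w _ => hf'' w)
            (mem_univ x) (mem_univ z)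
      _ ≤ L * ‖y - x‖ := by gcongr; exact norm_sub_le_of_mem_segment hz
  simpa only [sq, mul_assoc] using (convex_segment x y).norm_image_sub_le_of_norm_fderiv_le'
    (fun z _ => hf z) hderiv (left_mem_segment ℝ x y) (right_mem_segment ℝ x y)

/-- Only linear in `‖w₀ - x‖`, so that the global error enters the local error linearly. -/
theorem norm_sub_sub_fderiv_apply_le_of_near (hf : Differentiable ℝ f)
    (hf' : Differentiable ℝ (fderiv ℝ f)) (hfL : ∀ v, ‖fderiv ℝ f v‖ ≤ L)
    (hf'' : ∀ v, ‖fderiv ℝ (fderiv ℝ f) v‖ ≤ L) (x w₀ w : E) :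
    ‖f w - f x - fderiv ℝ f x (w - x)‖ ≤
      L * ‖w - w₀‖ ^ 2 + L * ‖w₀ - x‖ * ‖w - w₀‖ + 2 * L * ‖w₀ - x‖ := by
  have hsplit : f w - f x - fderiv ℝ f x (w - x) =
      (f w - f w₀ - fderiv ℝ f w₀ (w - w₀)) + (fderiv ℝ f w₀ - fderiv ℝ f x) (w - w₀) +
        ((f w₀ - f x) - fderiv ℝ f x (w₀ - x)) := by
    simp only [sub_apply, map_sub]
    abel
  have hlin : ‖fderiv ℝ f w₀ - fderiv ℝ f x‖ ≤ L * ‖w₀ - x‖ :=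
    convex_univ.norm_image_sub_le_of_norm_fderiv_le (fun v _ => hf' v) (fun v _ => hf'' v)
      (mem_univ x) (mem_univ w₀)
  have hlip : ‖f w₀ - f x‖ ≤ L * ‖w₀ - x‖ :=
    convex_univ.norm_image_sub_le_of_norm_fderiv_le (fun v _ => hf v) (fun v _ => hfL v)
      (mem_univ x) (mem_univ w₀)
  have hJ : ‖fderiv ℝ f x (w₀ - x)‖ ≤ L * ‖w₀ - x‖ :=
    (ContinuousLinearMap.le_opNorm _ _).trans (by gcongr; exact hfL x)
  rw [hsplit]
  refine (norm_add₃_le).trans ?_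
  gcongr
  · exact norm_sub_sub_fderiv_apply_le hf hf' hf'' w₀ w
  · exact ((ContinuousLinearMap.le_opNorm _ _).trans (by gcongr))
  · linarith [norm_sub_le (f w₀ - f x) (fderiv ℝ f x (w₀ - x))]

end Taylor

theorem gronwallBound_le_exp_mul {δ a ε x : ℝ} (ha : 0 ≤ a) (hε : 0 ≤ ε) :
    gronwallBound δ a ε x ≤ Real.exp (a * x) * (δ + ε * x) := by
  rcases ha.eq_or_lt with rfl | ha
  · simp [gronwallBound_K0]
  rw [gronwallBound_of_K_ne_0 ha.ne']
  have hexp : Real.exp (a * x) - 1 ≤ a * x * Real.exp (a * x) := by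
    have := mul_le_mul_of_nonneg_left (Real.one_sub_le_exp_neg (a * x)) (Real.exp_pos (a * x)).le
    rw [← Real.exp_add, add_neg_cancel, Real.exp_zero] at this
    linarith
  have : ε / a * (Real.exp (a * x) - 1) ≤ ε * x * Real.exp (a * x) := by
    calc ε / a * (Real.exp (a * x) - 1) ≤ ε / a * (a * x * Real.exp (a * x)) := by gcongr
      _ = ε * x * Real.exp (a * x) := by field_simp
  linarith

theorem norm_le_exp_mul_of_norm_deriv_le {E : Type*} [NormedAddCommGroup E] [NormedSpace ℝ E]
    {f f' : ℝ → E} {a ε h : ℝ} (ha : 0 ≤ a) (hε : 0 ≤ ε) (hh : 0 ≤ h)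
    (hf : ∀ s ∈ Icc 0 h, HasDerivAt f (f' s) s)
    (bound : ∀ s ∈ Ico 0 h, ‖f' s‖ ≤ a * ‖f s‖ + ε) :
    ‖f h‖ ≤ Real.exp (a * h) * (‖f 0‖ + ε * h) := by
  have hgron := norm_le_gronwallBound_of_norm_deriv_right_le
    (fun s hs => (hf s hs).continuousAt.continuousWithinAt)
    (fun s hs => (hf s (Ico_subset_Icc_self hs)).hasDerivWithinAt) le_rfl bound h ⟨hh, le_rfl⟩
  rw [sub_zero] at hgron
  exact hgron.trans (gronwallBound_le_exp_mul ha hε)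

theorem le_natCast_mul_pow_mul_of_le_mul_add {e : ℕ → ℝ} {E q : ℝ} {n : ℕ} (hE : 1 ≤ E)
    (hq : 0 ≤ q) (h0 : e 0 ≤ 0) (hstep : ∀ m < n, e (m + 1) ≤ E * (e m + q)) :
    e n ≤ n * E ^ n * q := by
  suffices ∀ m ≤ n, e m ≤ m * E ^ m * q from this n le_rfl
  intro m hm
  induction m with
  | zero => simpa using h0
  | succ m ih =>
    have hEm : E ≤ E ^ (m + 1) := le_self_pow₀ hE m.succ_ne_zero
    calc e (m + 1) ≤ E * (m * E ^ m * q + q) :=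
          (hstep m hm).trans (by gcongr; exact ih (by omega))
      _ = m * E ^ (m + 1) * q + E * q := by ring
      _ ≤ m * E ^ (m + 1) * q + E ^ (m + 1) * q := by gcongr
      _ = (m + 1 : ℕ) * E ^ (m + 1) * q := by push_cast; ring

section ErrorBounds

variable {H : Type*} [NormedAddCommGroup H] [NormedSpace ℝ H] [CompleteSpace H]
  {A : H →L[ℝ] H} {F : H → H} {L V t h : ℝ} {u : ℝ → H}

theorem norm_sub_eremStep_le (hFdiff : Differentiable ℝ F)
    (hFdiff2 : Differentiable ℝ (fderiv ℝ F)) (hF' : ∀ v, ‖fderiv ℝ F v‖ ≤ L)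
    (hF'' : ∀ v, ‖fderiv ℝ (fderiv ℝ F) v‖ ≤ L) (hh : 0 ≤ h)
    (hu : ∀ s ∈ Icc t (t + h), HasDerivAt u (A (u s) + F (u s)) s)
    (hV : ∀ s ∈ Icc t (t + h), ‖A (u s) + F (u s)‖ ≤ V) (x : H) :
    ‖u (t + h) - eremStep A F h x‖ ≤
      Real.exp ((‖A‖ + L * (3 + V * h)) * h) * (‖u t - x‖ + L * V ^ 2 * h ^ 3) := by
  set J := fderiv ℝ F x
  set β := ‖u t - x‖
  have hL : 0 ≤ L := (norm_nonneg _).trans (hF' 0)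
  have hV0 : 0 ≤ V := (norm_nonneg _).trans (hV t ⟨le_rfl, by linarith⟩)
  have hmem : ∀ s ∈ Icc 0 h, t + s ∈ Icc t (t + h) := fun s hs =>
    ⟨by linarith [hs.1], by linarith [hs.2]⟩
  have hdrift : ∀ s ∈ Icc 0 h, ‖u (t + s) - u t‖ ≤ V * h := by
    intro s hs
    calc ‖u (t + s) - u t‖ ≤ V * (t + s - t) :=
          norm_image_sub_le_of_norm_deriv_le_segment'
            (fun r hr => (hu r hr).hasDerivWithinAt) (fun r hr => hV r (Ico_subset_Icc_self hr))
            _ (hmem s hs)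
      _ ≤ V * h := by gcongr; linarith [hs.2]
  set ε := L * V ^ 2 * h ^ 2 + (L * V * h + 2 * L) * β
  have hr : ∀ s ∈ Icc 0 h, ‖F (u (t + s)) - F x - J (u (t + s) - x)‖ ≤ ε := by
    intro s hs
    refine (norm_sub_sub_fderiv_apply_le_of_near hFdiff hFdiff2 hF' hF'' x (u t) _).trans ?_
    calc _ ≤ L * (V * h) ^ 2 + L * β * (V * h) + 2 * L * β := by gcongr <;> exact hdrift s hs
      _ = ε := by ring
  have hK : ‖A + J‖ ≤ ‖A‖ + L := (norm_add_le _ _).trans (by gcongr; exact hF' x)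
  have hgron := norm_le_exp_mul_of_norm_deriv_le (a := ‖A‖ + L) (by positivity) (by positivity) hh
    (fun s hs => hasDerivAt_sub_affineFlow x (hu _ (hmem s hs)))
    fun s hs => (norm_add_le _ _).trans (add_le_add
      (((A + J).le_opNorm _).trans (by gcongr)) (hr s (Ico_subset_Icc_self hs)))
  simp only [add_zero, affineFlow_zero] at hgron
  calc ‖u (t + h) - eremStep A F h x‖ ≤ Real.exp ((‖A‖ + L) * h) * (β + ε * h) := hgron
    _ ≤ Real.exp ((‖A‖ + L) * h) *
          (Real.exp ((L * V * h + 2 * L) * h) * (β + L * V ^ 2 * h ^ 3)) := by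
        gcongr
        have hk : 0 ≤ (L * V * h + 2 * L) * h := by positivity
        calc β + ε * h = (1 + (L * V * h + 2 * L) * h) * β + L * V ^ 2 * h ^ 3 := by ring
          _ ≤ (1 + (L * V * h + 2 * L) * h) * (β + L * V ^ 2 * h ^ 3) := by
              nlinarith [mul_nonneg hk (by positivity : 0 ≤ L * V ^ 2 * h ^ 3)]
          _ ≤ _ := by gcongr; linarith [Real.add_one_le_exp ((L * V * h + 2 * L) * h)]
    _ = Real.exp ((‖A‖ + L * (3 + V * h)) * h) * (β + L * V ^ 2 * h ^ 3) := by
        rw [← mul_assoc, ← Real.exp_add]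
        ring_nf

theorem norm_sub_erem_le (hFdiff : Differentiable ℝ F)
    (hFdiff2 : Differentiable ℝ (fderiv ℝ F)) (hF' : ∀ v, ‖fderiv ℝ F v‖ ≤ L)
    (hF'' : ∀ v, ‖fderiv ℝ (fderiv ℝ F) v‖ ≤ L) {T Δt : ℝ} (hΔt : 0 ≤ Δt)
    (hu : ∀ s ∈ Icc 0 T, HasDerivAt u (A (u s) + F (u s)) s)
    (hV : ∀ s ∈ Icc 0 T, ‖A (u s) + F (u s)‖ ≤ V) {n : ℕ} (hn : n * Δt ≤ T) :
    ‖u (n * Δt) - erem A F Δt (u 0) n‖ ≤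
      Real.exp ((‖A‖ + L * (3 + V * Δt)) * (n * Δt)) * L * V ^ 2 * (n * Δt) * Δt ^ 2 := by
  have hL : 0 ≤ L := (norm_nonneg _).trans (hF' 0)
  have hstep : ∀ m < n, ‖u ((m + 1 : ℕ) * Δt) - erem A F Δt (u 0) (m + 1)‖ ≤
      Real.exp ((‖A‖ + L * (3 + V * Δt)) * Δt) *
        (‖u (m * Δt) - erem A F Δt (u 0) m‖ + L * V ^ 2 * Δt ^ 3) := by
    intro m hm
    have hsub : Icc (m * Δt) (m * Δt + Δt) ⊆ Icc 0 T := by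
      have : (m : ℝ) + 1 ≤ n := by exact_mod_cast hm
      refine Icc_subset_Icc (by positivity) ?_
      nlinarith
    rw [erem_succ, Nat.cast_succ, add_one_mul]
    exact norm_sub_eremStep_le hFdiff hFdiff2 hF' hF'' hΔt (fun s hs => hu s (hsub hs))
      (fun s hs => hV s (hsub hs)) _
  have hnΔt : 0 ≤ n * Δt := by positivity
  have hV0 : 0 ≤ V := (norm_nonneg _).trans (hV 0 ⟨le_rfl, hnΔt.trans hn⟩)
  calc ‖u (n * Δt) - erem A F Δt (u 0) n‖ ≤
        n * Real.exp ((‖A‖ + L * (3 + V * Δt)) * Δt) ^ n * (L * V ^ 2 * Δt ^ 3) :=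
        le_natCast_mul_pow_mul_of_le_mul_add
          (e := fun m : ℕ => ‖u (m * Δt) - erem A F Δt (u 0) m‖)
          (Real.one_le_exp (by positivity)) (by positivity) (by simp [erem]) hstep
    _ = _ := by rw [← Real.exp_nat_mul]; ring_nf

end ErrorBounds

theorem erem_second_order_convergence_general
    {H : Type*} [NormedAddCommGroup H] [NormedSpace ℝ H] [CompleteSpace H]
    (T : ℝ) (hT : 0 < T) (A : H →L[ℝ] H)
    (F : H → H) (L : ℝ)
    (hFdiff : Differentiable ℝ F)
    (hFdiff2 : Differentiable ℝ (fderiv ℝ F))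
    (hF' : ∀ v : H, ‖fderiv ℝ F v‖ ≤ L)
    (hF'' : ∀ v : H, ‖fderiv ℝ (fderiv ℝ F) v‖ ≤ L)
    (u : ℝ → H)
    (hu : ∀ t ∈ Set.Icc (0 : ℝ) T, HasDerivAt u (A (u t) + F (u t)) t) :
    ∃ C : ℝ, ∀ N : ℕ, 1 ≤ N → ∀ n : ℕ, n ≤ N →
      ‖u ((n : ℝ) * (T / (N : ℝ))) - erem A F (T / (N : ℝ)) (u 0) n‖ ≤
        C * (T / (N : ℝ)) ^ 2 := by
  have hucont : ContinuousOn u (Icc 0 T) := fun t ht => (hu t ht).continuousAt.continuousWithinAt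
  obtain ⟨V, hV⟩ := isCompact_Icc.exists_bound_of_continuousOn
    ((A.continuous.comp_continuousOn hucont).add (hFdiff.continuous.comp_continuousOn hucont))
  have hL : 0 ≤ L := (norm_nonneg _).trans (hF' 0)
  have hV0 : 0 ≤ V := (norm_nonneg _).trans (hV 0 ⟨le_rfl, hT.le⟩)
  refine ⟨Real.exp ((‖A‖ + L * (3 + V * T)) * T) * L * V ^ 2 * T, fun N hN n hn => ?_⟩
  have hN0 : (0 : ℝ) < N := by exact_mod_cast hN
  have hΔtT : T / N ≤ T := div_le_self hT.le (by exact_mod_cast hN)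
  have hnΔt : n * (T / N) ≤ T :=
    calc n * (T / N) ≤ N * (T / N) := by gcongr
      _ = T := mul_div_cancel₀ T hN0.ne'
  refine (norm_sub_erem_le hFdiff hFdiff2 hF' hF'' (by positivity) hu hV hnΔt).trans ?_
  gcongr

/-- **Second-order convergence of the exponential Rosenbrock–Euler method.**
Let `A` be a bounded operator on a real Banach space with `‖exp (t A)‖ ≤ M` on
`[0,T]`, and let `F` be twice Fréchet differentiable, globally Lipschitz with
constant `L`, with `‖F'(v)‖ ≤ L` and `‖F''(v)‖ ≤ L` for all `v`.  Let
`u : [0,T] → H` be twice continuously differentiable with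
`u'(t) = A (u t) + F (u t)` on `[0,T]`.  Then there is a constant `C`
(depending only on `M`, `L`, `T` and the bounds `K₁ = sup ‖u'‖`, `K₂ = sup ‖u''‖`,
but not on `N`, `n` or `Δt`) such that for every `N ≥ 1`, with `Δt := T/N` and
`t_n := n Δt`, the exponential Rosenbrock–Euler approximations `u_n` started at
`u₀ := u(0)` satisfy `‖u(t_n) − u_n‖ ≤ C Δt²` for all `0 ≤ n ≤ N`. -/
theorem erem_second_order_convergence
    {H : Type*} [NormedAddCommGroup H] [NormedSpace ℝ H] [CompleteSpace H]
    (T : ℝ) (hT : 0 < T) (A : H →L[ℝ] H) (M : ℝ)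
    (hA : ∀ t ∈ Set.Icc (0 : ℝ) T, ‖exp (t • A)‖ ≤ M)
    (F : H → H) (L : ℝ)
    (hFlip : ∀ x y : H, ‖F x - F y‖ ≤ L * ‖x - y‖)
    (hFdiff : Differentiable ℝ F)
    (hFdiff2 : Differentiable ℝ (fderiv ℝ F))
    (hF' : ∀ v : H, ‖fderiv ℝ F v‖ ≤ L)
    (hF'' : ∀ v : H, ‖fderiv ℝ (fderiv ℝ F) v‖ ≤ L)
    (u : ℝ → H) (u'' : ℝ → H)
    (hu : ∀ t ∈ Set.Icc (0 : ℝ) T, HasDerivAt u (A (u t) + F (u t)) t)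
    (hu'' : ∀ t ∈ Set.Icc (0 : ℝ) T,
      HasDerivAt (fun s => A (u s) + F (u s)) (u'' t) t)
    (hu''cont : ContinuousOn u'' (Set.Icc 0 T)) :
    ∃ C : ℝ, ∀ N : ℕ, 1 ≤ N → ∀ n : ℕ, n ≤ N →
      ‖u ((n : ℝ) * (T / (N : ℝ))) - erem A F (T / (N : ℝ)) (u 0) n‖ ≤
        C * (T / (N : ℝ)) ^ 2 :=
  erem_second_order_convergence_general T hT A F L hFdiff hFdiff2 hF' hF'' u hu
end
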